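/- arXiv:1909.10484 — 5 statements merged into one kernel-verified Lean document; each statement's English description precedes it below -/
import Mathlib

section
/- The convex weight is convex: for devices D and E in a convex compact set of devices with convex free subset F, and p ∈ [0,1], W_F(pD + (1-p)E) ≤ p·W_F(D) + (1-p)·W_F(E). -/
/-- The convex weight of a device `D` with respect to the free subset `F`
of the set of devices `Dev`. -/
noncomputable def convexWeight {V : Type*} [AddCommGroup V] [Module ℝ V]
    (Dev F : Set V) (D : V) : ℝ :=
  sInf {l : ℝ | l ∈ Set.Icc (0 : ℝ) 1 ∧
    ∃ DF ∈ F, ∃ Dt ∈ Dev, D = (1 - l) • DF + l • Dt}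

/-
If `l` is an admissible weight for `D` and `m` one for `E`, regrouping the free parts and the
remaining parts of `p D + (1 - p) E` into one convex combination each shows that `p l + (1 - p) m`
is admissible for `p D + (1 - p) E`. So the admissible weights of the mixture contain the
Minkowski combination of those of `D` and `E`, and taking infima gives the inequality, since
`sInf` commutes with nonnegative scaling and with sums of nonempty sets bounded below.
-/
open Set Pointwise

section ConvexWeight

variable {V : Type*} [AddCommGroup V] [Module ℝ V] (Dev F : Set V)

def admissibleWeights (D : V) : Set ℝ :=
  {l : ℝ | l ∈ Icc (0 : ℝ) 1 ∧ ∃ DF ∈ F, ∃ Dt ∈ Dev, D = (1 - l) • DF + l • Dt}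

theorem convexWeight_eq_sInf_admissibleWeights (D : V) :
    convexWeight Dev F D = sInf (admissibleWeights Dev F D) :=
  rfl

theorem admissibleWeights_nonempty {F : Set V} (hFne : F.Nonempty) {D : V} (hD : D ∈ Dev) :
    (admissibleWeights Dev F D).Nonempty := by
  obtain ⟨DF, hDF⟩ := hFne
  exact ⟨1, right_mem_Icc.2 zero_le_one, DF, hDF, D, hD, by simp⟩

theorem bddBelow_admissibleWeights (D : V) : BddBelow (admissibleWeights Dev F D) :=
  ⟨0, fun _ hl => hl.1.1⟩

variable {Dev F}

theorem add_mem_admissibleWeights (hDev : Convex ℝ Dev) (hF : Convex ℝ F) {D E : V} {a b l m : ℝ}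
    (ha : 0 ≤ a) (hb : 0 ≤ b) (hab : a + b = 1)
    (hl : l ∈ admissibleWeights Dev F D) (hm : m ∈ admissibleWeights Dev F E) :
    a * l + b * m ∈ admissibleWeights Dev F (a • D + b • E) := by
  obtain ⟨⟨hl0, hl1⟩, DF, hDF, Dt, hDt, rfl⟩ := hl
  obtain ⟨⟨hm0, hm1⟩, EF, hEF, Et, hEt, rfl⟩ := hm
  obtain ⟨zF, hzF, hzF_eq⟩ := hF.exists_mem_add_smul_eq hDF hEF
    (mul_nonneg ha (sub_nonneg.2 hl1)) (mul_nonneg hb (sub_nonneg.2 hm1))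
  obtain ⟨zt, hzt, hzt_eq⟩ := hDev.exists_mem_add_smul_eq hDt hEt
    (mul_nonneg ha hl0) (mul_nonneg hb hm0)
  have hr : a * l + b * m ∈ Icc (0 : ℝ) 1 := by
    constructor <;> nlinarith [mul_nonneg ha hl0, mul_nonneg hb hm0]
  refine ⟨hr, zF, hzF, zt, hzt, ?_⟩
  have hfree : 1 - (a * l + b * m) = a * (1 - l) + b * (1 - m) := by
    linear_combination -hab
  rw [hfree, hzF_eq, hzt_eq]
  simp only [smul_add, smul_smul]
  abel

end ConvexWeight

theorem convexWeight_convex_general {V : Type*} [NormedAddCommGroup V] [NormedSpace ℝ V]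
    (Dev F : Set V) (hDev : Convex ℝ Dev)
    (hF : Convex ℝ F) (hFne : F.Nonempty)
    (D E : V) (hD : D ∈ Dev) (hE : E ∈ Dev) (p : ℝ) (hp : p ∈ Set.Icc (0 : ℝ) 1) :
    convexWeight Dev F (p • D + (1 - p) • E)
      ≤ p * convexWeight Dev F D + (1 - p) * convexWeight Dev F E := by
  obtain ⟨hp0, hp1⟩ := hp
  have hq0 : 0 ≤ 1 - p := sub_nonneg.2 hp1
  have hDne := admissibleWeights_nonempty Dev hFne hD
  have hEne := admissibleWeights_nonempty Dev hFne hE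
  have hsub : p • admissibleWeights Dev F D + (1 - p) • admissibleWeights Dev F E ⊆
      admissibleWeights Dev F (p • D + (1 - p) • E) := by
    rintro _ ⟨_, ⟨l, hl, rfl⟩, _, ⟨m, hm, rfl⟩, rfl⟩
    exact add_mem_admissibleWeights hDev hF hp0 hq0 (add_sub_cancel p 1) hl hm
  simp only [convexWeight_eq_sInf_admissibleWeights]
  calc sInf (admissibleWeights Dev F (p • D + (1 - p) • E))
      ≤ sInf (p • admissibleWeights Dev F D + (1 - p) • admissibleWeights Dev F E) :=
        csInf_le_csInf (bddBelow_admissibleWeights Dev F _)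
          (hDne.smul_set.add hEne.smul_set) hsub
    _ = p * sInf (admissibleWeights Dev F D) + (1 - p) * sInf (admissibleWeights Dev F E) := by
        rw [csInf_add hDne.smul_set ((bddBelow_admissibleWeights Dev F D).smul_of_nonneg hp0)
            hEne.smul_set ((bddBelow_admissibleWeights Dev F E).smul_of_nonneg hq0),
          Real.sInf_smul_of_nonneg hp0, Real.sInf_smul_of_nonneg hq0, smul_eq_mul, smul_eq_mul]

/-- The convex weight is convex. -/
theorem convexWeight_convex {V : Type*} [NormedAddCommGroup V] [NormedSpace ℝ V]
    (Dev F : Set V) (hDev : Convex ℝ Dev) (hDevC : IsCompact Dev)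
    (hF : Convex ℝ F) (hFC : IsCompact F) (hFsub : F ⊆ Dev) (hFne : F.Nonempty)
    (D E : V) (hD : D ∈ Dev) (hE : E ∈ Dev) (p : ℝ) (hp : p ∈ Set.Icc (0 : ℝ) 1) :
    convexWeight Dev F (p • D + (1 - p) • E)
      ≤ p * convexWeight Dev F D + (1 - p) * convexWeight Dev F E :=
  convexWeight_convex_general Dev F hDev hF hFne D E hD hE p hp
end

section
/- If the infimum over all 'games' (linear functionals P nonnegative on Dev, not identically zero on F) of the ratio P(D)/min_{Γ∈F}P(Γ) is considered (restricted to games where min_{Γ∈F}P(Γ) > 0), then this infimum is at least 1 - W_F(D). -/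
section ConvexWeight

variable {V : Type*} [AddCommGroup V] [Module ℝ V] {Dev F : Set V}

theorem le_convexWeight {D : V} (hFne : F.Nonempty) (hD : D ∈ Dev) {c : ℝ}
    (h : ∀ l ∈ Set.Icc (0 : ℝ) 1, ∀ DF ∈ F, ∀ Dt ∈ Dev, D = (1 - l) • DF + l • Dt → c ≤ l) :
    c ≤ convexWeight Dev F D := by
  obtain ⟨Γ, hΓ⟩ := hFne
  refine le_csInf ⟨1, ⟨by norm_num, Γ, hΓ, D, hD, by simp⟩⟩ ?_
  rintro l ⟨hl, DF, hDF, Dt, hDt, hDeq⟩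
  exact h l hl DF hDF Dt hDt hDeq

theorem LinearMap.one_sub_mul_le_apply_combo {P : V →ₗ[ℝ] ℝ} (hP : ∀ E ∈ Dev, 0 ≤ P E)
    {m l : ℝ} (hm : ∀ E ∈ F, m ≤ P E) (hl : l ∈ Set.Icc (0 : ℝ) 1)
    {DF Dt : V} (hDF : DF ∈ F) (hDt : Dt ∈ Dev) :
    (1 - l) * m ≤ P ((1 - l) • DF + l • Dt) := by
  rw [map_add, map_smul, map_smul, smul_eq_mul, smul_eq_mul]
  have hfree : (1 - l) * m ≤ (1 - l) * P DF :=
    mul_le_mul_of_nonneg_left (hm DF hDF) (sub_nonneg.mpr hl.2)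
  have hdev : 0 ≤ l * P Dt := mul_nonneg hl.1 (hP Dt hDt)
  linarith

end ConvexWeight

theorem game_ratio_lower_bound_general {V : Type*} [NormedAddCommGroup V] [NormedSpace ℝ V]
    (Dev F : Set V) (hFsub : F ⊆ Dev) (hFne : F.Nonempty)
    (D : V) (hD : D ∈ Dev) :
    ∀ P : V →ₗ[ℝ] ℝ, (∀ E ∈ Dev, 0 ≤ P E) → 0 < sInf (P '' F) →
      1 - convexWeight Dev F D ≤ P D / sInf (P '' F) := by
  intro P hP hm
  have hmin : ∀ E ∈ F, sInf (P '' F) ≤ P E := fun E hE =>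
    csInf_le ⟨0, Set.forall_mem_image.mpr fun E' hE' => hP E' (hFsub hE')⟩ ⟨E, hE, rfl⟩
  suffices 1 - P D / sInf (P '' F) ≤ convexWeight Dev F D by linarith
  refine le_convexWeight hFne hD fun l hl DF hDF Dt hDt hDeq => ?_
  have hcombo := P.one_sub_mul_le_apply_combo hP hmin hl hDF hDt
  rw [← hDeq, ← le_div_iff₀ hm] at hcombo
  linarith

/-- For every game (a linear functional nonnegative on `Dev` whose minimum over `F`
is strictly positive), the payoff ratio is at least `1 - W_F(D)`; hence so is the
infimum of the ratios over all games. -/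
theorem game_ratio_lower_bound {V : Type*} [NormedAddCommGroup V] [NormedSpace ℝ V]
    [FiniteDimensional ℝ V]
    (Dev F : Set V) (hDev : Convex ℝ Dev) (hDevC : IsCompact Dev)
    (hF : Convex ℝ F) (hFC : IsCompact F) (hFsub : F ⊆ Dev) (hFne : F.Nonempty)
    (D : V) (hD : D ∈ Dev) :
    ∀ P : V →ₗ[ℝ] ℝ, (∀ E ∈ Dev, 0 ≤ P E) → 0 < sInf (P '' F) →
      1 - convexWeight Dev F D ≤ P D / sInf (P '' F) :=
  game_ratio_lower_bound_general Dev F hFsub hFne D hD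
end

section
/- Cone program primal formulation of the weight for a single POVM: for a POVM M = (M_i)_{i=1..n} on a d-dimensional Hilbert space and free convex cone C_F generated by a convex compact set F of POVMs, one has 1 - W_F(M) = max{(1/d)·Σ_i tr[O_i] : 0 ≤ O_i ≤ M_i for all i, (O_i) ∈ C_F}. -/
open Matrix
open scoped ComplexOrder

/-- A POVM with `n` outcomes on `ℂ^d`: positive semidefinite effects summing to the identity. -/
def IsPOVM {d n : ℕ} (M : Fin n → Matrix (Fin d) (Fin d) ℂ) : Prop :=
  (∀ i, (M i).PosSemidef) ∧ ∑ i, M i = 1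

/-- The convex weight of a POVM `M` with respect to a free set `F` of POVMs. -/
noncomputable def povmWeight {d n : ℕ} (F : Set (Fin n → Matrix (Fin d) (Fin d) ℂ))
    (M : Fin n → Matrix (Fin d) (Fin d) ℂ) : ℝ :=
  sInf {l : ℝ | l ∈ Set.Icc (0 : ℝ) 1 ∧
    ∃ N ∈ F, ∃ Mt, IsPOVM Mt ∧ M = (1 - l) • N + l • Mt}

/-!
Write a feasible tuple as `O = a • T` with `T ∈ F`. Since `Σ tr T_i = d`, the objective is `a`,
and tracing `Σ (M_i - a T_i) = (1 - a) • 1 ≥ 0` forces `a ≤ 1`. Then `O_i ≤ M_i` says exactly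
that `M = a • T + (1 - a) • M̃` with `M̃ = (M - a • T) / (1 - a)` a POVM (for `a = 1` the PSD
differences `M_i - T_i` sum to `0`, so `M = T`). Hence the feasible values are the complements
of the weights admissible in `W_F(M)`, and the maximum exists because `F` is compact and the
constraints are closed.
-/

section PosSemidef

variable {m 𝕜 : Type*} [RCLike 𝕜]

theorem Matrix.isClosed_setOf_posSemidef [Fintype m] :
    IsClosed {A : Matrix m m 𝕜 | A.PosSemidef} := by
  simp only [posSemidef_iff_dotProduct_mulVec, Set.ofPred_and, Set.ofPred_forall]
  refine (isClosed_eq continuous_id.matrix_conjTranspose continuous_id).inter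
    (isClosed_iInter fun x => isClosed_le continuous_const ?_)
  fun_prop

theorem Matrix.PosSemidef.eq_zero_of_sum_eq_zero {ι : Type*} [Fintype ι] {A : ι → Matrix m m 𝕜}
    (hA : ∀ i, (A i).PosSemidef) (hsum : ∑ i, A i = 0) (i : ι) : A i = 0 := by
  open MatrixOrder in
  exact (Finset.sum_eq_zero_iff_of_nonneg fun j _ => (hA j).nonneg).mp hsum i (Finset.mem_univ i)

end PosSemidef

variable {d n : ℕ}

theorem IsPOVM.sum_trace {T : Fin n → Matrix (Fin d) (Fin d) ℂ} (hT : IsPOVM T) :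
    ∑ i, (T i).trace = d := by
  rw [← trace_sum, hT.2, trace_one, Fintype.card_fin]

theorem sum_sub_smul_eq_smul_one {M T : Fin n → Matrix (Fin d) (Fin d) ℂ} (hM : ∑ i, M i = 1)
    (hT : ∑ i, T i = 1) (a : ℝ) :
    ∑ i, (M i - a • T i) = (1 - a) • (1 : Matrix (Fin d) (Fin d) ℂ) := by
  rw [Finset.sum_sub_distrib, ← Finset.smul_sum, hM, hT, sub_smul, one_smul]

theorem IsPOVM.eq_of_posSemidef_sub {M T : Fin n → Matrix (Fin d) (Fin d) ℂ} (hM : IsPOVM M)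
    (hT : IsPOVM T) (h : ∀ i, (M i - T i).PosSemidef) : M = T := by
  have hsum : ∑ i, (M i - T i) = 0 := by
    rw [Finset.sum_sub_distrib, hM.2, hT.2, sub_self]
  funext i
  exact sub_eq_zero.mp (PosSemidef.eq_zero_of_sum_eq_zero h hsum i)

theorem le_one_of_posSemidef_sub_smul [NeZero d] {M T : Fin n → Matrix (Fin d) (Fin d) ℂ}
    (hM : ∑ i, M i = 1) (hT : ∑ i, T i = 1) {a : ℝ} (h : ∀ i, (M i - a • T i).PosSemidef) :
    a ≤ 1 := by
  have hpsd : ((1 - a) • (1 : Matrix (Fin d) (Fin d) ℂ)).PosSemidef := by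
    rw [← sum_sub_smul_eq_smul_one hM hT]
    exact posSemidef_sum _ fun i _ => h i
  exact_mod_cast (by simpa using hpsd.diag_nonneg (i := 0) : (a : ℂ) ≤ 1)

theorem primal_objective_smul [NeZero d] {T : Fin n → Matrix (Fin d) (Fin d) ℂ} (hT : IsPOVM T)
    (a : ℝ) : (1 / (d : ℝ)) * (∑ i, ((a • T) i).trace).re = a := by
  simp only [Pi.smul_apply, trace_smul, Complex.real_smul, ← Finset.mul_sum, hT.sum_trace]
  rw [← Complex.ofReal_natCast, ← Complex.ofReal_mul, Complex.ofReal_re]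
  field_simp [NeZero.ne d]

def freeFractions (F : Set (Fin n → Matrix (Fin d) (Fin d) ℂ))
    (M : Fin n → Matrix (Fin d) (Fin d) ℂ) : Set ℝ :=
  {a | a ∈ Set.Icc 0 1 ∧ ∃ T ∈ F, ∀ i, (M i - a • T i).PosSemidef}

section freeFractions

variable {F : Set (Fin n → Matrix (Fin d) (Fin d) ℂ)} {M : Fin n → Matrix (Fin d) (Fin d) ℂ}

theorem zero_mem_freeFractions (hF : F.Nonempty) (hM : IsPOVM M) : 0 ∈ freeFractions F M := by
  obtain ⟨T, hT⟩ := hF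
  exact ⟨Set.left_mem_Icc.mpr zero_le_one, T, hT, fun i => by simpa using hM.1 i⟩

theorem isCompact_freeFractions (hF : IsCompact F) : IsCompact (freeFractions F M) := by
  have hclosed : IsClosed {p : ℝ × (Fin n → Matrix (Fin d) (Fin d) ℂ) |
      ∀ i, (M i - p.1 • p.2 i).PosSemidef} := by
    simp only [Set.ofPred_forall]
    exact isClosed_iInter fun i => isClosed_setOf_posSemidef.preimage (by fun_prop)
  convert (((isCompact_Icc (a := 0) (b := 1)).prod hF).inter_right hclosed).image
    continuous_fst using 1
  ext a
  simp [freeFractions, and_assoc]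

theorem setOf_primal_eq_freeFractions [NeZero d] (hF : ∀ N ∈ F, IsPOVM N) (hM : IsPOVM M) :
    {r : ℝ | ∃ O : Fin n → Matrix (Fin d) (Fin d) ℂ,
      (∀ i, (O i).PosSemidef) ∧ (∀ i, (M i - O i).PosSemidef) ∧
      (∃ a : ℝ, 0 ≤ a ∧ ∃ T ∈ F, O = a • T) ∧ r = (1 / (d : ℝ)) * (∑ i, (O i).trace).re} =
    freeFractions F M := by
  ext r
  constructor
  · rintro ⟨_, -, hpsd, ⟨a, ha, T, hTF, rfl⟩, rfl⟩
    have hT := hF T hTF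
    rw [primal_objective_smul hT]
    exact ⟨⟨ha, le_one_of_posSemidef_sub_smul hM.2 hT.2 hpsd⟩, T, hTF, hpsd⟩
  · rintro ⟨hr, T, hTF, hpsd⟩
    exact ⟨r • T, fun i => ((hF T hTF).1 i).smul hr.1, hpsd, ⟨r, hr.1, T, hTF, rfl⟩,
      (primal_objective_smul (hF T hTF) r).symm⟩

theorem sub_mem_freeFractions_of_decomposition {l : ℝ} (hl : l ∈ Set.Icc 0 1)
    {N Mt : Fin n → Matrix (Fin d) (Fin d) ℂ} (hN : N ∈ F) (hMt : IsPOVM Mt)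
    (hdec : M = (1 - l) • N + l • Mt) : 1 - l ∈ freeFractions F M := by
  refine ⟨⟨by linarith [hl.2], by linarith [hl.1]⟩, N, hN, fun i => ?_⟩
  rw [hdec, Pi.add_apply, Pi.smul_apply, Pi.smul_apply, add_sub_cancel_left]
  exact (hMt.1 i).smul hl.1

theorem decomposition_of_sub_mem_freeFractions (hF : ∀ N ∈ F, IsPOVM N) (hM : IsPOVM M) {l : ℝ}
    (hl : 1 - l ∈ freeFractions F M) :
    l ∈ Set.Icc 0 1 ∧ ∃ N ∈ F, ∃ Mt, IsPOVM Mt ∧ M = (1 - l) • N + l • Mt := by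
  obtain ⟨⟨hl1, hl0⟩, T, hTF, hpsd⟩ := hl
  have hT := hF T hTF
  have hl01 : l ∈ Set.Icc 0 1 := ⟨by linarith, by linarith⟩
  refine ⟨hl01, T, hTF, ?_⟩
  rcases eq_or_ne l 0 with rfl | hl
  · refine ⟨M, hM, ?_⟩
    simpa using hM.eq_of_posSemidef_sub hT (by simpa using hpsd)
  refine ⟨l⁻¹ • (M - (1 - l) • T), ⟨fun i => (hpsd i).smul (inv_nonneg.mpr hl01.1), ?_⟩, ?_⟩
  · simp only [Pi.smul_apply, Pi.sub_apply]
    rw [← Finset.smul_sum, sum_sub_smul_eq_smul_one hM.2 hT.2, sub_sub_cancel, smul_smul,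
      inv_mul_cancel₀ hl, one_smul]
  · rw [smul_smul, mul_inv_cancel₀ hl, one_smul, add_sub_cancel]

theorem povmWeight_eq_of_isGreatest (hF : ∀ N ∈ F, IsPOVM N) (hM : IsPOVM M) {a : ℝ}
    (ha : IsGreatest (freeFractions F M) a) : povmWeight F M = 1 - a := by
  refine IsLeast.csInf_eq ⟨decomposition_of_sub_mem_freeFractions hF hM ?_, ?_⟩
  · rw [sub_sub_cancel]
    exact ha.1
  · rintro l ⟨hl, N, hN, Mt, hMt, hdec⟩
    linarith [ha.2 (sub_mem_freeFractions_of_decomposition hl hN hMt hdec)]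

end freeFractions

theorem povmWeight_primal_general {d n : ℕ} [NeZero d]
    (F : Set (Fin n → Matrix (Fin d) (Fin d) ℂ))
    (hFpovm : ∀ N ∈ F, IsPOVM N) (hFne : F.Nonempty)
    (hFcomp : IsCompact F)
    (M : Fin n → Matrix (Fin d) (Fin d) ℂ) (hM : IsPOVM M) :
    IsGreatest {r : ℝ | ∃ O : Fin n → Matrix (Fin d) (Fin d) ℂ,
        (∀ i, (O i).PosSemidef) ∧ (∀ i, (M i - O i).PosSemidef) ∧
        (∃ a : ℝ, 0 ≤ a ∧ ∃ T ∈ F, O = a • T) ∧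
        r = (1 / (d : ℝ)) * (∑ i, (O i).trace).re}
      (1 - povmWeight F M) := by
  obtain ⟨a, ha⟩ := (isCompact_freeFractions hFcomp).exists_isGreatest
    ⟨0, zero_mem_freeFractions hFne hM⟩
  rwa [povmWeight_eq_of_isGreatest hFpovm hM ha, sub_sub_cancel,
    setOf_primal_eq_freeFractions hFpovm hM]

/-- Cone-program primal formulation of the convex weight of a POVM:
`1 - W_F(M)` is the maximum of `(1/d) Σ_i tr O_i` over operator tuples `O` with
`0 ≤ O_i ≤ M_i` lying in the cone generated by `F`. -/
theorem povmWeight_primal {d n : ℕ} [NeZero d] [NeZero n]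
    (F : Set (Fin n → Matrix (Fin d) (Fin d) ℂ))
    (hFpovm : ∀ N ∈ F, IsPOVM N) (hFne : F.Nonempty) (hFconv : Convex ℝ F)
    (hFcomp : IsCompact F)
    (M : Fin n → Matrix (Fin d) (Fin d) ℂ) (hM : IsPOVM M) :
    IsGreatest {r : ℝ | ∃ O : Fin n → Matrix (Fin d) (Fin d) ℂ,
        (∀ i, (O i).PosSemidef) ∧ (∀ i, (M i - O i).PosSemidef) ∧
        (∃ a : ℝ, 0 ≤ a ∧ ∃ T ∈ F, O = a • T) ∧
        r = (1 / (d : ℝ)) * (∑ i, (O i).trace).re}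
      (1 - povmWeight F M) :=
  povmWeight_primal_general F hFpovm hFne hFcomp M hM
end

section
/- Weight of a POVM with respect to trivial POVMs: for a POVM M = (M_i)_{i=1..n} on ℂ^d with each M_i > 0 invertible, the convex weight with respect to the set F of trivial POVMs {p(i)·1} satisfies 1 - W_F(M) = Σ_i λ_min(M_i), where λ_min(M_i) is the smallest eigenvalue of M_i. -/
/-!
`M_i - t·𝟙 ⪰ 0` holds exactly when `t ≤ λ_min(M_i)`. Hence `M = (1-λ)·(p(i)·𝟙) + λ·M̃` forces
`(1-λ) p(i) ≤ λ_min(M_i)`, and summing over `i` gives `1 - λ ≤ Σ_i λ_min(M_i) =: S`.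
Conversely, for every `λ > 1 - S` the distribution `p(i) = λ_min(M_i) / S` leaves
`M̃_i = λ⁻¹ (M_i - (1-λ) p(i)·𝟙)` positive semidefinite, and these `M̃_i` sum to `𝟙`.
Finally `S ≤ 1`, since `Σ_i (M_i - λ_min(M_i)·𝟙) = (1 - S)·𝟙 ⪰ 0`. So the feasible weights
contain `(1 - S, 1]` and lie in `[1 - S, ∞)`, and `W_F(M) = 1 - S`.
-/

open Matrix
open scoped ComplexOrder

/-- The set of trivial POVMs `O_i = p(i)·𝟙`. -/
def TrivialPOVMs (d n : ℕ) : Set (Fin n → Matrix (Fin d) (Fin d) ℂ) :=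
  {O | ∃ p : Fin n → ℝ, (∀ i, 0 ≤ p i) ∧ ∑ i, p i = 1 ∧
    O = fun i => (p i) • (1 : Matrix (Fin d) (Fin d) ℂ)}

open scoped MatrixOrder

namespace Matrix

lemma nonneg_of_posSemidef_smul_one {𝕜 ι : Type*} [RCLike 𝕜] [DecidableEq ι] [Nonempty ι]
    {r : ℝ} (h : (r • (1 : Matrix ι ι 𝕜)).PosSemidef) : 0 ≤ r := by
  have := h.diag_nonneg (i := Classical.arbitrary ι)
  rwa [Matrix.smul_apply, one_apply_eq, RCLike.real_smul_eq_coe_mul, mul_one,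
    RCLike.ofReal_nonneg] at this

variable {𝕜 ι : Type*} [RCLike 𝕜] [Fintype ι] [DecidableEq ι] {A : Matrix ι ι 𝕜}

lemma IsHermitian.posSemidef_sub_smul_one_iff (hA : A.IsHermitian) (t : ℝ) :
    (A - t • 1).PosSemidef ↔ ∀ j, t ≤ hA.eigenvalues j := by
  rw [← nonneg_iff_posSemidef, sub_nonneg, ← Algebra.algebraMap_eq_smul_one,
    algebraMap_le_iff_le_spectrum hA.isSelfAdjoint, hA.spectrum_real_eq_range_eigenvalues,
    Set.forall_mem_range]

noncomputable def IsHermitian.minEigenvalue (hA : A.IsHermitian) : ℝ :=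
  ⨅ j, hA.eigenvalues j

lemma IsHermitian.posSemidef_sub_smul_one_iff_le_minEigenvalue [Nonempty ι]
    (hA : A.IsHermitian) (t : ℝ) : (A - t • 1).PosSemidef ↔ t ≤ hA.minEigenvalue := by
  rw [hA.posSemidef_sub_smul_one_iff, IsHermitian.minEigenvalue,
    le_ciInf_iff (Set.finite_range _).bddBelow]

lemma IsHermitian.posSemidef_sub_minEigenvalue_smul_one [Nonempty ι] (hA : A.IsHermitian) :
    (A - hA.minEigenvalue • 1).PosSemidef :=
  (hA.posSemidef_sub_smul_one_iff_le_minEigenvalue _).mpr le_rfl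

lemma PosDef.minEigenvalue_pos [Nonempty ι] (hA : A.PosDef) : 0 < hA.1.minEigenvalue := by
  obtain ⟨j, hj⟩ := exists_eq_ciInf_of_finite (f := hA.1.eigenvalues)
  rw [IsHermitian.minEigenvalue, ← hj]
  exact hA.eigenvalues_pos j

end Matrix

lemma csInf_eq_of_Ioc_subset_of_subset_Ici {α : Type*} [ConditionallyCompleteLinearOrder α]
    [DenselyOrdered α] {s : Set α} {a b : α} (hab : a < b) (hIoc : Set.Ioc a b ⊆ s)
    (hIci : s ⊆ Set.Ici a) : sInf s = a := by
  have hs : s.Nonempty := (Set.nonempty_Ioc.mpr hab).mono hIoc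
  refine le_antisymm ?_ (le_csInf hs hIci)
  calc sInf s ≤ sInf (Set.Ioc a b) :=
        csInf_le_csInf ⟨a, hIci⟩ (Set.nonempty_Ioc.mpr hab) hIoc
    _ = a := csInf_Ioc hab

namespace IsPOVM

variable {d n : ℕ} {M : Fin n → Matrix (Fin d) (Fin d) ℂ}

lemma sum_minEigenvalue_le_one [NeZero d] (hM : IsPOVM M) :
    ∑ i, (hM.1 i).1.minEigenvalue ≤ 1 := by
  have hsum : ∑ i, (M i - (hM.1 i).1.minEigenvalue • 1) =
      (1 - ∑ i, (hM.1 i).1.minEigenvalue) • (1 : Matrix (Fin d) (Fin d) ℂ) := by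
    rw [Finset.sum_sub_distrib, ← Finset.sum_smul, sub_smul, one_smul]
    exact congrArg (· - _) hM.2
  have hpsd : ((1 - ∑ i, (hM.1 i).1.minEigenvalue) • (1 : Matrix (Fin d) (Fin d) ℂ)).PosSemidef :=
    hsum ▸ posSemidef_sum _ fun i _ => (hM.1 i).1.posSemidef_sub_minEigenvalue_smul_one
  linarith [nonneg_of_posSemidef_smul_one hpsd]

lemma one_sub_le_sum_minEigenvalue [NeZero d] (hM : IsPOVM M) {l : ℝ} (hl : 0 ≤ l)
    {N : Fin n → Matrix (Fin d) (Fin d) ℂ} (hN : N ∈ TrivialPOVMs d n)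
    {Mt : Fin n → Matrix (Fin d) (Fin d) ℂ} (hMt : IsPOVM Mt) (hdec : M = (1 - l) • N + l • Mt) :
    1 - l ≤ ∑ i, (hM.1 i).1.minEigenvalue := by
  obtain ⟨p, -, hp1, rfl⟩ := hN
  have hle : ∀ i, (1 - l) * p i ≤ (hM.1 i).1.minEigenvalue := fun i => by
    have hMi : M i - ((1 - l) * p i) • 1 = l • Mt i := by
      rw [hdec, Pi.add_apply, Pi.smul_apply, Pi.smul_apply, smul_smul, add_sub_cancel_left]
    rw [← (hM.1 i).1.posSemidef_sub_smul_one_iff_le_minEigenvalue, hMi]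
    exact (hMt.1 i).smul hl
  calc 1 - l = ∑ i, (1 - l) * p i := by rw [← Finset.mul_sum, hp1, mul_one]
    _ ≤ _ := Finset.sum_le_sum fun i _ => hle i

lemma exists_trivial_decomposition [NeZero d] (hM : IsPOVM M)
    (hS : 0 < ∑ i, (hM.1 i).1.minEigenvalue) {l : ℝ} (hl : 0 < l)
    (hlS : 1 - l ≤ ∑ i, (hM.1 i).1.minEigenvalue) :
    ∃ N ∈ TrivialPOVMs d n, ∃ Mt, IsPOVM Mt ∧ M = (1 - l) • N + l • Mt := by
  set c := fun i => (hM.1 i).1.minEigenvalue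
  set S := ∑ i, c i
  have hc : ∀ i, 0 ≤ c i := fun i =>
    ((hM.1 i).1.posSemidef_sub_smul_one_iff_le_minEigenvalue 0).mp (by simpa using hM.1 i)
  have hp1 : ∑ i, c i / S = 1 := by rw [← Finset.sum_div, div_self hS.ne']
  refine ⟨fun i => (c i / S) • 1, ⟨fun i => c i / S, fun i => div_nonneg (hc i) hS.le, hp1, rfl⟩,
    fun i => l⁻¹ • (M i - ((1 - l) * (c i / S)) • 1), ⟨fun i => ?_, ?_⟩, ?_⟩
  · refine PosSemidef.smul ?_ (inv_nonneg.mpr hl.le)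
    rw [(hM.1 i).1.posSemidef_sub_smul_one_iff_le_minEigenvalue]
    calc (1 - l) * (c i / S) ≤ S * (c i / S) := by gcongr; exact div_nonneg (hc i) hS.le
      _ = c i := mul_div_cancel₀ _ hS.ne'
  · have hmass : ∑ i, (1 - l) * (c i / S) = 1 - l := by rw [← Finset.mul_sum, hp1, mul_one]
    rw [← Finset.smul_sum, Finset.sum_sub_distrib, hM.2, ← Finset.sum_smul, hmass, sub_smul,
      one_smul, sub_sub_cancel, smul_smul, inv_mul_cancel₀ hl.ne', one_smul]
  · funext i
    simp only [Pi.add_apply, Pi.smul_apply, smul_smul, mul_inv_cancel₀ hl.ne', one_smul]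
    abel

end IsPOVM

/-- The convex weight of a POVM with positive definite effects with respect to
trivial POVMs: `1 - W_F(M) = Σ_i λ_min(M_i)`. -/
theorem povmWeight_trivial {d n : ℕ} [NeZero d] [NeZero n]
    (M : Fin n → Matrix (Fin d) (Fin d) ℂ) (hM : IsPOVM M)
    (hpos : ∀ i, (M i).PosDef) :
    1 - povmWeight (TrivialPOVMs d n) M = ∑ i, ⨅ j, (hpos i).1.eigenvalues j := by
  change _ = ∑ i, (hM.1 i).1.minEigenvalue
  set S := ∑ i, (hM.1 i).1.minEigenvalue
  have hS : 0 < S := Finset.sum_pos (fun i _ => (hpos i).minEigenvalue_pos) Finset.univ_nonempty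
  have hW : povmWeight (TrivialPOVMs d n) M = 1 - S := by
    refine csInf_eq_of_Ioc_subset_of_subset_Ici (b := 1) (by linarith) ?_ ?_
    · rintro l ⟨hl, hl1⟩
      have hl0 : 0 < l := by linarith [hM.sum_minEigenvalue_le_one]
      exact ⟨⟨hl0.le, hl1⟩, hM.exists_trivial_decomposition hS hl0 (by linarith)⟩
    · rintro l ⟨⟨hl0, -⟩, N, hN, Mt, hMt, hdec⟩
      exact Set.mem_Ici.mpr (by linarith [hM.one_sub_le_sum_minEigenvalue hl0 hN hMt hdec])
  rw [hW, sub_sub_cancel]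
end

section
/- Characterization of convex components of a POVM via the dilation: if M_i = J*P_i J is a minimal Naimark dilation and E ≥ 0 commutes with all P_i, satisfies J*EJ = 1 and E ≤ λ^{-1}·1 for some λ ∈ (0,1], then M_{i|1} := J*P_i E J is a POVM and M_i = λ·M_{i|1} + (1-λ)·Q_i where Q_i := (1-λ)^{-1}(M_i - λ M_{i|1}) is also a POVM (for λ < 1). -/
open Matrix
open scoped ComplexOrder

/-!
If a positive `A` commutes with an orthogonal projection `P`, then `J* (P A) J = (P J)* A (P J)`
is positive. Apply this to `A = E` and to `A = 1 - λE = λ (λ⁻¹ - E)`, whose compressions are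
`M_{i|1}` and `M_i - λ M_{i|1}`; the sums over `i` collapse via `∑ P_i = 1` to `J* A J`.
-/

namespace Matrix

variable {m n ι R : Type*} [Fintype n] [Fintype ι]

section Compression

variable [Ring R] [StarRing R]

theorem conjTranspose_mul_mul_mul_eq_of_commute {P A : Matrix n n R} (J : Matrix n m R)
    (hP : IsIdempotentElem P) (hPh : P.IsHermitian) (hPA : Commute P A) :
    Jᴴ * (P * A) * J = (P * J)ᴴ * A * (P * J) := by
  have hPAP : P * A * P = P * A := by rw [hPA.eq, Matrix.mul_assoc, hP.eq]
  rw [conjTranspose_mul, hPh.eq, ← hPAP]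
  simp only [Matrix.mul_assoc]

theorem sum_conjTranspose_mul_mul_mul_eq [DecidableEq n] (P : ι → Matrix n n R)
    (hP : ∑ i, P i = 1) (A : Matrix n n R) (J : Matrix n m R) :
    ∑ i, Jᴴ * (P i * A) * J = Jᴴ * A * J := by
  rw [← Matrix.sum_mul, ← Matrix.mul_sum, ← Matrix.sum_mul, hP, Matrix.one_mul]

end Compression

theorem PosSemidef.conjTranspose_mul_mul_mul_of_commute [CommRing R] [PartialOrder R]
    [StarRing R] [Finite m] {P A : Matrix n n R} (hA : A.PosSemidef) (J : Matrix n m R)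
    (hP : IsIdempotentElem P) (hPh : P.IsHermitian) (hPA : Commute P A) :
    (Jᴴ * (P * A) * J).PosSemidef := by
  rw [conjTranspose_mul_mul_mul_eq_of_commute J hP hPh hPA]
  exact hA.conjTranspose_mul_mul_same _

omit [Fintype n] in
theorem PosSemidef.one_sub_smul_of_inv_smul_one_sub [DecidableEq n] {E : Matrix n n ℂ} {l : ℝ}
    (hl : 0 < l) (hE : (l⁻¹ • (1 : Matrix n n ℂ) - E).PosSemidef) :
    (1 - l • E).PosSemidef := by
  have h : 1 - l • E = l • (l⁻¹ • (1 : Matrix n n ℂ) - E) := by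
    rw [smul_sub, smul_smul, mul_inv_cancel₀ hl.ne', one_smul]
  rw [h]
  exact hE.smul hl.le

end Matrix

theorem naimark_convex_component_general {d N n : ℕ}
    (J : Matrix (Fin N) (Fin d) ℂ) (hJ : Jᴴ * J = 1)
    (P : Fin n → Matrix (Fin N) (Fin N) ℂ)
    (hProj : ∀ i, P i * P i = P i) (hHerm : ∀ i, (P i).IsHermitian)
    (hSum : ∑ i, P i = 1)
    (E : Matrix (Fin N) (Fin N) ℂ) (hE : E.PosSemidef)
    (hcomm : ∀ i, E * P i = P i * E)
    (hnorm : Jᴴ * E * J = 1)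
    (l : ℝ) (hl0 : 0 < l)
    (hEl : (l⁻¹ • (1 : Matrix (Fin N) (Fin N) ℂ) - E).PosSemidef) :
    (∑ i, Jᴴ * (P i * E) * J = 1) ∧
    (∀ i, (Jᴴ * (P i * E) * J).PosSemidef) ∧
    (∀ i, (Jᴴ * P i * J - l • (Jᴴ * (P i * E) * J)).PosSemidef) ∧
    (∑ i, (Jᴴ * P i * J - l • (Jᴴ * (P i * E) * J))
      = (1 - l) • (1 : Matrix (Fin d) (Fin d) ℂ)) := by
  set F : Matrix (Fin N) (Fin N) ℂ := 1 - l • E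
  have hPE : ∀ i, Commute (P i) E := fun i => (hcomm i).symm
  have hPF : ∀ i, Commute (P i) F := fun i =>
    (Commute.one_right _).sub_right ((hPE i).smul_right l)
  have hcompress : ∀ i, Jᴴ * P i * J - l • (Jᴴ * (P i * E) * J) = Jᴴ * (P i * F) * J :=
    fun i => by
      simp only [F, Matrix.mul_sub, Matrix.sub_mul, Matrix.mul_one, Matrix.mul_smul,
        Matrix.smul_mul]
  simp only [hcompress, sum_conjTranspose_mul_mul_mul_eq P hSum]
  refine ⟨hnorm, fun i => hE.conjTranspose_mul_mul_mul_of_commute J (hProj i) (hHerm i) (hPE i),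
    fun i => (hEl.one_sub_smul_of_inv_smul_one_sub hl0).conjTranspose_mul_mul_mul_of_commute J
      (hProj i) (hHerm i) (hPF i), ?_⟩
  calc Jᴴ * F * J = Jᴴ * J - l • (Jᴴ * E * J) := by
        simp only [F, Matrix.mul_sub, Matrix.sub_mul, Matrix.mul_one, Matrix.mul_smul,
          Matrix.smul_mul]
    _ = (1 - l) • 1 := by rw [hJ, hnorm, sub_smul, one_smul]

/-- Characterization of convex components of a POVM via the Naimark dilation:
if `M_i = J* P_i J` and `E ≥ 0` commutes with the `P_i`, satisfies `J* E J = 𝟙`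
and `E ≤ λ⁻¹·𝟙` for `0 < λ < 1`, then `M_{i|1} = J* P_i E J` is a POVM and
`Q_i = (1-λ)⁻¹ (M_i - λ M_{i|1})` is a POVM completing the convex decomposition
`M_i = λ M_{i|1} + (1-λ) Q_i`. -/
theorem naimark_convex_component {d N n : ℕ}
    (J : Matrix (Fin N) (Fin d) ℂ) (hJ : Jᴴ * J = 1)
    (P : Fin n → Matrix (Fin N) (Fin N) ℂ)
    (hProj : ∀ i, P i * P i = P i) (hHerm : ∀ i, (P i).IsHermitian)
    (hOrth : ∀ i j, i ≠ j → P i * P j = 0) (hSum : ∑ i, P i = 1)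
    (E : Matrix (Fin N) (Fin N) ℂ) (hE : E.PosSemidef)
    (hcomm : ∀ i, E * P i = P i * E)
    (hnorm : Jᴴ * E * J = 1)
    (l : ℝ) (hl0 : 0 < l) (hl1 : l < 1)
    (hEl : (l⁻¹ • (1 : Matrix (Fin N) (Fin N) ℂ) - E).PosSemidef) :
    (∑ i, Jᴴ * (P i * E) * J = 1) ∧
    (∀ i, (Jᴴ * (P i * E) * J).PosSemidef) ∧
    (∀ i, (Jᴴ * P i * J - l • (Jᴴ * (P i * E) * J)).PosSemidef) ∧
    (∑ i, (Jᴴ * P i * J - l • (Jᴴ * (P i * E) * J))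
      = (1 - l) • (1 : Matrix (Fin d) (Fin d) ℂ)) :=
  naimark_convex_component_general J hJ P hProj hHerm hSum E hE hcomm hnorm l hl0 hEl
end
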